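/- arXiv:2012.03288 — 2 statements merged into one kernel-verified Lean document; each statement's English description precedes it below -/
import Mathlib

section
/- The function u(x,y) = sin(x) + sin(y) + sin((x+y)/√2) on ℝ² satisfies Δu = u (geometer's Laplacian) and vanishes on the line y = -x. -/
/-! Each term of `u` is a plane wave `sin (ξ ⬝ (x, y))` with `‖ξ‖ = 1`, for `ξ = (1, 0)`, `(0, 1)`,
`(1/√2, 1/√2)`; differentiating twice in `x` and in `y` multiplies it by `-ξ₁²` and `-ξ₂²`, so the
Laplacian multiplies it by `ξ₁² + ξ₂² = 1`. On `y = -x` the first two waves cancel and the third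
is `sin 0`. -/

open Real

section SecondDerivative

variable {f g h : ℝ → ℝ} {a b c : ℝ}

theorem deriv_sin_add_sin_add_sin (hf : ∀ t, HasDerivAt f a t) (hg : ∀ t, HasDerivAt g b t)
    (hh : ∀ t, HasDerivAt h c t) :
    deriv (fun t => sin (f t) + sin (g t) + sin (h t)) =
      fun t => cos (f t) * a + cos (g t) * b + cos (h t) * c :=
  funext fun t => (((hf t).sin.fun_add (hg t).sin).fun_add (hh t).sin).deriv

theorem deriv_deriv_sin_add_sin_add_sin (hf : ∀ t, HasDerivAt f a t)
    (hg : ∀ t, HasDerivAt g b t) (hh : ∀ t, HasDerivAt h c t) (t : ℝ) :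
    deriv (deriv (fun t => sin (f t) + sin (g t) + sin (h t))) t =
      -(a ^ 2 * sin (f t) + b ^ 2 * sin (g t) + c ^ 2 * sin (h t)) := by
  rw [deriv_sin_add_sin_add_sin hf hg hh,
    ((((hf t).cos.mul_const a).fun_add ((hg t).cos.mul_const b)).fun_add
      ((hh t).cos.mul_const c)).deriv]
  ring

end SecondDerivative

theorem nullset_example (u : ℝ → ℝ → ℝ)
    (hu : u = fun x y => Real.sin x + Real.sin y + Real.sin ((x + y) / Real.sqrt 2)) :
    (∀ x y, -((deriv (deriv (fun x' => u x' y)) x) + (deriv (deriv (fun y' => u x y')) y))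
      = u x y) ∧
    (∀ x, u x (-x) = 0) := by
  subst hu
  refine ⟨fun x y => ?_, fun x => by simp [sin_neg]⟩
  rw [deriv_deriv_sin_add_sin_add_sin (fun t => hasDerivAt_id' t) (fun _ => hasDerivAt_const _ _)
      (fun t => ((hasDerivAt_id' t).add_const y).div_const _),
    deriv_deriv_sin_add_sin_add_sin (fun _ => hasDerivAt_const _ _) (fun t => hasDerivAt_id' t)
      (fun t => ((hasDerivAt_id' t).const_add x).div_const _)]
  have hfreq : (1 / √2) ^ 2 = 1 / 2 := by rw [div_pow, sq_sqrt zero_le_two, one_pow]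
  rw [hfreq]
  ring
end

section
/- Let u : ℝⁿ → ℝ be real analytic, satisfying Δu = λu on ℝⁿ, and suppose u vanishes identically on the hyperplane H = {x : xₙ = 0}. Then u is antisymmetric across H: u(x₁,...,x_{n-1}, -x_n) = -u(x₁,...,x_{n-1},x_n) for all x ∈ ℝⁿ. -/
/-- The geometer's Laplacian: `Δu = -∑ ∂²u/∂xₖ²`. -/
noncomputable def geomLaplacian (n : ℕ) (u : EuclideanSpace ℝ (Fin n) → ℝ)
    (x : EuclideanSpace ℝ (Fin n)) : ℝ :=
  -∑ i : Fin n,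
    fderiv ℝ (fun y => fderiv ℝ u y (EuclideanSpace.single i (1:ℝ))) x
      (EuclideanSpace.single i (1:ℝ))

/-!
Put `v = u ∘ R + u`, where `R` reflects the last coordinate. As `R` is an isometry fixing the
hyperplane `H`, `v` is again an analytic eigenfunction of the Laplacian, and both `v` and its normal
derivative `∂ₙv` vanish on `H`. Normal derivatives commute with the Laplacian, and the equation
`∂ₙ²w = -λw - ∑_{i<n} ∂ᵢ²w` expresses `∂ₙ²w` on `H` through `w` and its tangential derivatives
there; so by induction every `∂ₙᵏv` vanishes on `H`. On each normal line `v` is then a real-analytic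
function of one variable all of whose derivatives vanish at a point, hence `v = 0`.
-/

open scoped ContDiff

section DirDeriv

variable {E F : Type*} [NormedAddCommGroup E] [NormedSpace ℝ E]
  [NormedAddCommGroup F] [NormedSpace ℝ F]

noncomputable def dirDeriv (e : E) (f : E → F) : E → F := fun x => fderiv ℝ f x e

theorem dirDeriv_apply (e : E) (f : E → F) (x : E) : dirDeriv e f x = fderiv ℝ f x e := rfl

theorem ContDiff.dirDeriv {m n : WithTop ℕ∞} {f : E → F} (hf : ContDiff ℝ n f)
    (hmn : m + 1 ≤ n) (e : E) : ContDiff ℝ m (_root_.dirDeriv e f) :=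
  (hf.fderiv_right hmn).clm_apply contDiff_const

theorem ContDiff.iterate_dirDeriv {f : E → F} (hf : ContDiff ℝ ∞ f) (e : E) (k : ℕ) :
    ContDiff ℝ ∞ ((_root_.dirDeriv e)^[k] f) := by
  induction k with
  | zero => exact hf
  | succ k ih =>
    rw [Function.iterate_succ_apply']
    exact ih.dirDeriv (by simp) e

theorem ContDiff.differentiable_dirDeriv {f : E → F} (hf : ContDiff ℝ 2 f) (e : E) :
    Differentiable ℝ (_root_.dirDeriv e f) :=
  (hf.dirDeriv (m := 1) (by norm_num) e).differentiable one_ne_zero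

theorem dirDeriv_neg (e : E) (f : E → F) : dirDeriv (-e) f = -dirDeriv e f := by
  ext x
  simp [dirDeriv_apply]

theorem dirDeriv_fun_neg (e : E) (f : E → F) : dirDeriv e (-f) = -dirDeriv e f := by
  ext x
  simp [dirDeriv_apply, fderiv_neg]

theorem dirDeriv_neg_dirDeriv_neg (e : E) (f : E → F) :
    dirDeriv (-e) (dirDeriv (-e) f) = dirDeriv e (dirDeriv e f) := by
  rw [dirDeriv_neg, dirDeriv_neg, dirDeriv_fun_neg, neg_neg]

theorem dirDeriv_add {f g : E → F} (hf : Differentiable ℝ f) (hg : Differentiable ℝ g) (e : E) :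
    dirDeriv e (f + g) = dirDeriv e f + dirDeriv e g := by
  ext x
  simp [dirDeriv_apply, fderiv_add (hf x) (hg x)]

theorem dirDeriv_sum {ι : Type*} (s : Finset ι) {f : ι → E → F}
    (hf : ∀ i ∈ s, Differentiable ℝ (f i)) (e : E) :
    dirDeriv e (∑ i ∈ s, f i) = ∑ i ∈ s, dirDeriv e (f i) := by
  ext x
  simp [dirDeriv_apply, fderiv_sum fun i hi => hf i hi x]

theorem dirDeriv_comp_clm {G : Type*} [NormedAddCommGroup G] [NormedSpace ℝ G] (L : G →L[ℝ] E)
    {f : E → F} (hf : Differentiable ℝ f) (e : G) :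
    dirDeriv e (f ∘ L) = dirDeriv (L e) f ∘ L := by
  ext x
  simp [dirDeriv_apply, fderiv_comp x (hf _) L.differentiableAt, L.fderiv]

theorem dirDeriv_comm {f : E → F} (hf : ContDiff ℝ 2 f) (a b : E) :
    dirDeriv a (dirDeriv b f) = dirDeriv b (dirDeriv a f) := by
  have hf' : Differentiable ℝ (fderiv ℝ f) :=
    (hf.fderiv_right (m := 1) le_rfl).differentiable one_ne_zero
  ext x
  change fderiv ℝ (fun y => fderiv ℝ f y b) x a = fderiv ℝ (fun y => fderiv ℝ f y a) x b
  rw [fderiv_clm_apply (hf' x) (differentiableAt_const b),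
    fderiv_clm_apply (hf' x) (differentiableAt_const a)]
  simpa using hf.contDiffAt.isSymmSndFDerivAt (by simp) a b

theorem dirDeriv_eq_zero_of_forall_add_smul_eq_zero {f : E → F} {x : E} (e : E)
    (hf : DifferentiableAt ℝ f x) (h : ∀ t : ℝ, f (x + t • e) = 0) : dirDeriv e f x = 0 := by
  rw [dirDeriv_apply, ← hf.lineDeriv_eq_fderiv, lineDeriv]
  simp [h]

theorem iteratedDeriv_comp_add_smul {f : E → F} (hf : ContDiff ℝ ∞ f) (x e : E) (k : ℕ) :
    iteratedDeriv k (fun t : ℝ => f (x + t • e)) = fun t => (dirDeriv e)^[k] f (x + t • e) := by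
  induction k with
  | zero => rfl
  | succ k ih =>
    ext t
    have hline : HasDerivAt (fun s : ℝ => x + s • e) e t := by
      simpa using ((hasDerivAt_id t).smul_const e).const_add x
    have hdiff := (hf.iterate_dirDeriv e k).differentiable (by simp) (x + t • e)
    rw [iteratedDeriv_succ, ih, Function.iterate_succ_apply']
    exact (hdiff.hasFDerivAt.comp_hasDerivAt t hline).deriv

theorem eq_zero_of_iterate_dirDeriv_eq_zero [CompleteSpace F] {f : E → F}
    (hf : ∀ x, AnalyticAt ℝ f x) {x e : E} (h : ∀ k, (dirDeriv e)^[k] f x = 0) (t : ℝ) :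
    f (x + t • e) = 0 := by
  have hline : ∀ s, AnalyticAt ℝ (fun t : ℝ => f (x + t • e)) s := fun s =>
    (hf _).comp (analyticAt_const.add (analyticAt_id.smul analyticAt_const))
  have htop : analyticOrderAt (fun t : ℝ => f (x + t • e)) 0 = ⊤ := by
    refine ENat.eq_top_iff_forall_ge.mpr fun m => ?_
    rw [natCast_le_analyticOrderAt_iff_iteratedDeriv_eq_zero (hline 0)]
    intro k _
    simpa [iteratedDeriv_comp_add_smul (AnalyticOnNhd.contDiff fun y _ => hf y)] using h k
  exact congrFun ((AnalyticOnNhd.analyticOrderAt_eq_top_iff_eq_zero 0 hline).mp htop) t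

end DirDeriv

section CoordReflection

variable {ι : Type*} [Fintype ι] [DecidableEq ι]

noncomputable def coordReflection (j : ι) : EuclideanSpace ℝ ι →L[ℝ] EuclideanSpace ℝ ι :=
  ContinuousLinearMap.id ℝ _ - (EuclideanSpace.proj j).smulRight (EuclideanSpace.single j (2 : ℝ))

theorem coordReflection_apply (j : ι) (x : EuclideanSpace ℝ ι) :
    coordReflection j x = WithLp.toLp 2 (Function.update x j (-x j)) := by
  ext i
  rcases eq_or_ne i j with rfl | hi
  · simp [coordReflection, mul_two]
  · simp [coordReflection, hi]

theorem coordReflection_of_apply_eq_zero {j : ι} {x : EuclideanSpace ℝ ι} (hx : x j = 0) :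
    coordReflection j x = x := by
  ext i
  rcases eq_or_ne i j with rfl | hi
  · simp [coordReflection_apply, hx]
  · simp [coordReflection_apply, hi]

theorem coordReflection_single_self (j : ι) (a : ℝ) :
    coordReflection j (EuclideanSpace.single j a) = -EuclideanSpace.single j a := by
  ext i
  rcases eq_or_ne i j with rfl | hi
  · simp [coordReflection_apply]
  · simp [coordReflection_apply, hi]

theorem coordReflection_single_of_ne {i j : ι} (hij : i ≠ j) (a : ℝ) :
    coordReflection j (EuclideanSpace.single i a) = EuclideanSpace.single i a := by
  rw [coordReflection_of_apply_eq_zero]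
  simp [hij.symm]

end CoordReflection

theorem EuclideanSpace.toLp_update_zero_add_smul_single {ι : Type*} [Fintype ι] [DecidableEq ι]
    (x : EuclideanSpace ℝ ι) (j : ι) :
    WithLp.toLp 2 (Function.update x j 0) + x j • EuclideanSpace.single j 1 = x := by
  ext i
  rcases eq_or_ne i j with rfl | hi
  · simp
  · simp [hi]

section Laplacian

variable {n : ℕ}

local notation "∂[" i "]" => dirDeriv (EuclideanSpace.single i (1 : ℝ))

theorem geomLaplacian_eq_neg_sum (u : EuclideanSpace ℝ (Fin n) → ℝ) :
    geomLaplacian n u = -∑ i, ∂[i] (∂[i] u) := by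
  ext x
  simp only [geomLaplacian, Pi.neg_apply, Finset.sum_apply]
  rfl

theorem geomLaplacian_add {u w : EuclideanSpace ℝ (Fin n) → ℝ} (hu : ContDiff ℝ 2 u)
    (hw : ContDiff ℝ 2 w) : geomLaplacian n (u + w) = geomLaplacian n u + geomLaplacian n w := by
  simp only [geomLaplacian_eq_neg_sum, dirDeriv_add (hu.differentiable two_ne_zero)
    (hw.differentiable two_ne_zero), dirDeriv_add (hu.differentiable_dirDeriv _)
    (hw.differentiable_dirDeriv _), Finset.sum_add_distrib, neg_add]

theorem geomLaplacian_comp_coordReflection {u : EuclideanSpace ℝ (Fin n) → ℝ}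
    (hu : ContDiff ℝ 2 u) (j : Fin n) :
    geomLaplacian n (u ∘ coordReflection j) = geomLaplacian n u ∘ coordReflection j := by
  have hsecond : ∀ e, dirDeriv e (dirDeriv e (u ∘ coordReflection j)) =
      dirDeriv (coordReflection j e) (dirDeriv (coordReflection j e) u) ∘ coordReflection j :=
    fun e => by
      rw [dirDeriv_comp_clm _ (hu.differentiable two_ne_zero),
        dirDeriv_comp_clm _ (hu.differentiable_dirDeriv _)]
  have hsingle :
      ∀ i, ∂[i] (∂[i] (u ∘ coordReflection j)) = ∂[i] (∂[i] u) ∘ coordReflection j := by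
    intro i
    rcases eq_or_ne i j with rfl | hij
    · rw [hsecond, coordReflection_single_self, dirDeriv_neg_dirDeriv_neg]
    · rw [hsecond, coordReflection_single_of_ne hij]
  ext x
  simp only [geomLaplacian_eq_neg_sum, Pi.neg_apply, Finset.sum_apply, hsingle,
    Function.comp_apply]

theorem geomLaplacian_dirDeriv {u : EuclideanSpace ℝ (Fin n) → ℝ} (hu : ContDiff ℝ 3 u)
    (e : EuclideanSpace ℝ (Fin n)) :
    geomLaplacian n (dirDeriv e u) = dirDeriv e (geomLaplacian n u) := by
  have hu1 : ∀ e', ContDiff ℝ 2 (dirDeriv e' u) := fun e' => hu.dirDeriv (by norm_num) e'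
  have hswap : ∀ i, ∂[i] (∂[i] (dirDeriv e u)) = dirDeriv e (∂[i] (∂[i] u)) := fun i => by
    rw [dirDeriv_comm (hu.of_le (by norm_num)) _ e, dirDeriv_comm (hu1 _) _ e]
  rw [geomLaplacian_eq_neg_sum, geomLaplacian_eq_neg_sum, dirDeriv_fun_neg,
    dirDeriv_sum _ fun i _ => (hu1 _).differentiable_dirDeriv _]
  simp only [hswap]

theorem geomLaplacian_iterate_dirDeriv {u : EuclideanSpace ℝ (Fin n) → ℝ} (hu : ContDiff ℝ ∞ u)
    {lam : ℝ} (heq : ∀ x, geomLaplacian n u x = lam * u x) (e : EuclideanSpace ℝ (Fin n))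
    (k : ℕ) (x : EuclideanSpace ℝ (Fin n)) :
    geomLaplacian n ((dirDeriv e)^[k] u) x = lam * (dirDeriv e)^[k] u x := by
  induction k generalizing x with
  | zero => exact heq x
  | succ k ih =>
    have hk := hu.iterate_dirDeriv e k
    rw [Function.iterate_succ_apply', geomLaplacian_dirDeriv (hk.of_le ENat.LEInfty.out),
      funext ih, dirDeriv_apply, fderiv_const_mul (hk.differentiable (by simp) x)]
    rfl

theorem dirDeriv_single_eq_zero_of_apply_eq_zero {f : EuclideanSpace ℝ (Fin n) → ℝ}
    (hf : Differentiable ℝ f) {i j : Fin n} (hij : i ≠ j)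
    (hf0 : ∀ x : EuclideanSpace ℝ (Fin n), x j = 0 → f x = 0)
    (x : EuclideanSpace ℝ (Fin n)) (hx : x j = 0) : ∂[i] f x = 0 :=
  dirDeriv_eq_zero_of_forall_add_smul_eq_zero _ (hf x) fun t => hf0 _ (by simp [hx, hij.symm])

theorem dirDeriv_dirDeriv_single_eq_zero {u : EuclideanSpace ℝ (Fin n) → ℝ} (hu : ContDiff ℝ 2 u)
    {lam : ℝ} (heq : ∀ x, geomLaplacian n u x = lam * u x) {j : Fin n}
    (hu0 : ∀ x : EuclideanSpace ℝ (Fin n), x j = 0 → u x = 0)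
    (x : EuclideanSpace ℝ (Fin n)) (hx : x j = 0) : ∂[j] (∂[j] u) x = 0 := by
  have htangential : ∀ i ≠ j, ∂[i] (∂[i] u) x = 0 := fun i hij =>
    dirDeriv_single_eq_zero_of_apply_eq_zero (hu.differentiable_dirDeriv _) hij
      (dirDeriv_single_eq_zero_of_apply_eq_zero (hu.differentiable two_ne_zero) hij hu0) x hx
  have hsum := heq x
  rw [hu0 x hx, mul_zero, geomLaplacian_eq_neg_sum, Pi.neg_apply, Finset.sum_apply,
    Finset.sum_eq_single j (fun i _ hij => htangential i hij) (by simp)] at hsum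
  exact neg_eq_zero.mp hsum

theorem iterate_dirDeriv_single_eq_zero {u : EuclideanSpace ℝ (Fin n) → ℝ} (hu : ContDiff ℝ ∞ u)
    {lam : ℝ} (heq : ∀ x, geomLaplacian n u x = lam * u x) {j : Fin n}
    (hu0 : ∀ x : EuclideanSpace ℝ (Fin n), x j = 0 → u x = 0)
    (hu1 : ∀ x : EuclideanSpace ℝ (Fin n), x j = 0 → ∂[j] u x = 0) (k : ℕ) :
    ∀ x : EuclideanSpace ℝ (Fin n), x j = 0 → (∂[j])^[k] u x = 0 := by
  induction k using Nat.twoStepInduction with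
  | zero => exact hu0
  | one => exact hu1
  | more k hk _ =>
    simp only [Function.iterate_succ_apply']
    exact dirDeriv_dirDeriv_single_eq_zero ((hu.iterate_dirDeriv _ k).of_le ENat.LEInfty.out)
      (geomLaplacian_iterate_dirDeriv hu heq _ k) hk

theorem eq_zero_of_cauchyData_eq_zero {u : EuclideanSpace ℝ (Fin n) → ℝ}
    (hu : ∀ x, AnalyticAt ℝ u x) {lam : ℝ} (heq : ∀ x, geomLaplacian n u x = lam * u x)
    {j : Fin n} (hu0 : ∀ x : EuclideanSpace ℝ (Fin n), x j = 0 → u x = 0)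
    (hu1 : ∀ x : EuclideanSpace ℝ (Fin n), x j = 0 → ∂[j] u x = 0)
    (x : EuclideanSpace ℝ (Fin n)) : u x = 0 := by
  rw [← EuclideanSpace.toLp_update_zero_add_smul_single x j]
  refine eq_zero_of_iterate_dirDeriv_eq_zero hu (fun k => ?_) _
  exact iterate_dirDeriv_single_eq_zero (AnalyticOnNhd.contDiff fun y _ => hu y) heq hu0 hu1 k _
    (by simp)

end Laplacian

theorem lame_fundamental (n : ℕ) (u : EuclideanSpace ℝ (Fin (n + 1)) → ℝ)
    (hu : ∀ x, AnalyticAt ℝ u x) (lam : ℝ)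
    (heq : ∀ x, geomLaplacian (n + 1) u x = lam * u x)
    (hvan : ∀ x : EuclideanSpace ℝ (Fin (n + 1)), x (Fin.last n) = 0 → u x = 0) :
    ∀ x : EuclideanSpace ℝ (Fin (n + 1)),
      u (WithLp.toLp 2 (Function.update x (Fin.last n) (-(x (Fin.last n))))) = -u x := by
  set R := coordReflection (Fin.last n)
  have hu_smooth : ContDiff ℝ 2 u := AnalyticOnNhd.contDiff fun y _ => hu y
  have huR_smooth : ContDiff ℝ 2 (u ∘ R) := hu_smooth.comp R.contDiff
  set v := u ∘ R + u with hv
  have hv_an : ∀ x, AnalyticAt ℝ v x := fun x => ((hu _).comp (R.analyticAt x)).add (hu x)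
  have hv_eq : ∀ x, geomLaplacian (n + 1) v x = lam * v x := fun x => by
    rw [hv, geomLaplacian_add huR_smooth hu_smooth, geomLaplacian_comp_coordReflection hu_smooth]
    simp only [Pi.add_apply, Function.comp_apply, heq]
    ring
  have hv0 : ∀ x : EuclideanSpace ℝ (Fin (n + 1)), x (Fin.last n) = 0 → v x = 0 := fun x hx => by
    simp [hv, R, coordReflection_of_apply_eq_zero hx, hvan x hx]
  have hv1 : ∀ x : EuclideanSpace ℝ (Fin (n + 1)), x (Fin.last n) = 0 →
      dirDeriv (EuclideanSpace.single (Fin.last n) 1) v x = 0 := fun x hx => by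
    rw [hv, dirDeriv_add (huR_smooth.differentiable two_ne_zero)
      (hu_smooth.differentiable two_ne_zero),
      dirDeriv_comp_clm _ (hu_smooth.differentiable two_ne_zero)]
    simp [R, coordReflection_single_self, coordReflection_of_apply_eq_zero hx, dirDeriv_neg]
  intro x
  have hvx := eq_zero_of_cauchyData_eq_zero hv_an hv_eq hv0 hv1 x
  rw [← coordReflection_apply]
  simp only [hv, Pi.add_apply, Function.comp_apply] at hvx
  linarith
end
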